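/- arXiv:2407.10924 — 5 statements merged into one kernel-verified Lean document; each statement's English description precedes it below -/
import Mathlib

section
/- Let p be a prime and R a commutative ring in which p·1 = 0. If t ∈ R satisfies t^p = 0, then for all a, b ∈ R the truncated exponential satisfies E(t·(a+b)) = E(t·a) · E(t·b). (This is the homomorphism property of the truncated exponential underlying the canonical self-Cartier-duality of the group scheme α_p.) -/
/-- The truncated exponential `E(t) = ∑_{i=0}^{p-1} (i!)⁻¹ · t^i`, where `(i!)⁻¹` denotes the
image in `R` of the inverse of `i!` in `ℤ/pℤ`. -/
noncomputable def truncExp (p : ℕ) {R : Type*} [CommRing R] (t : R) : R :=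
  ∑ i ∈ Finset.range p, ((((Nat.factorial i : ZMod p))⁻¹).val : R) * t ^ i

section Aux

variable {p : ℕ} {R : Type*} [CommRing R]

private lemma castMod (hchar : (p : R) = 0) (n : ℕ) : ((n % p : ℕ) : R) = n := by
  conv_rhs => rw [← Nat.mod_add_div n p]
  push_cast
  rw [hchar]
  ring

private lemma valCast_mul (hp : p.Prime) (hchar : (p : R) = 0) (x y : ZMod p) :
    (((x * y).val : ℕ) : R) = (x.val : R) * (y.val : R) := by
  haveI : NeZero p := ⟨hp.ne_zero⟩
  rw [ZMod.val_mul, castMod hchar, Nat.cast_mul]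

private lemma valCast_natCast (hp : p.Prime) (hchar : (p : R) = 0) (n : ℕ) :
    ((((n : ZMod p)).val : ℕ) : R) = (n : R) := by
  haveI : NeZero p := ⟨hp.ne_zero⟩
  rw [ZMod.val_natCast, castMod hchar]

private lemma key (hp : p.Prime) (hchar : (p : R) = 0) {j k : ℕ} (h : j + k < p) :
    ((((j + k).factorial : ZMod p))⁻¹.val : R) * ((j + k).choose j : R)
      = (((j.factorial : ZMod p))⁻¹.val : R) * (((k.factorial : ZMod p))⁻¹.val : R) := by
  haveI : Fact p.Prime := ⟨hp⟩
  have hz : ∀ m : ℕ, m < p → ((m.factorial : ZMod p)) ≠ 0 := by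
    intro m hm
    rw [Ne, ZMod.natCast_eq_zero_iff]
    exact fun hd => absurd ((Nat.Prime.dvd_factorial hp).mp hd) (by omega)
  have hid : ((j + k).factorial : ZMod p)⁻¹ * (((j + k).choose j : ℕ) : ZMod p)
      = (j.factorial : ZMod p)⁻¹ * (k.factorial : ZMod p)⁻¹ := by
    have h1 := hz (j + k) h
    have h2 := hz j (by omega)
    have h3 := hz k (by omega)
    have hnat := Nat.choose_mul_factorial_mul_factorial (Nat.le_add_right j k)
    have hsub : j + k - j = k := by omega
    rw [hsub] at hnat
    have : (((j + k).choose j : ℕ) : ZMod p) * (j.factorial : ZMod p) * (k.factorial : ZMod p)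
        = ((j + k).factorial : ZMod p) := by exact_mod_cast congrArg (Nat.cast : ℕ → ZMod p) hnat
    field_simp
    linear_combination this
  calc ((((j + k).factorial : ZMod p))⁻¹.val : R) * ((j + k).choose j : R)
      = ((((j + k).factorial : ZMod p))⁻¹.val : R)
          * (((((j + k).choose j : ℕ) : ZMod p)).val : R) := by
        rw [valCast_natCast hp hchar]
    _ = (((((j + k).factorial : ZMod p))⁻¹ * (((j + k).choose j : ℕ) : ZMod p)).val : R) := by
        rw [valCast_mul hp hchar]
    _ = ((((j.factorial : ZMod p))⁻¹ * ((k.factorial : ZMod p))⁻¹).val : R) := by rw [hid]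
    _ = _ := by rw [valCast_mul hp hchar]

end Aux

/-- Homomorphism property of the truncated exponential: if `p` is prime, `p·1 = 0` in `R` and
`t^p = 0`, then `E(t·(a+b)) = E(t·a) · E(t·b)`. -/
theorem truncExp_mul_add (p : ℕ) (hp : p.Prime) (R : Type*) [CommRing R]
    (hchar : (p : R) = 0) (t : R) (ht : t ^ p = 0) (a b : R) :
    truncExp p (t * (a + b)) = truncExp p (t * a) * truncExp p (t * b) := by
  classical
  set F : ℕ → R := fun i => (((i.factorial : ZMod p))⁻¹.val : R) with hF
  set f : ℕ × ℕ → R := fun x => F x.1 * F x.2 * t ^ (x.1 + x.2) * a ^ x.1 * b ^ x.2 with hf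
  have hLHS : truncExp p (t * (a + b))
      = ∑ i ∈ Finset.range p, ∑ j ∈ Finset.range (i + 1), f (j, i - j) := by
    unfold truncExp
    refine Finset.sum_congr rfl fun i hi => ?_
    rw [mul_pow, add_pow, Finset.mul_sum, Finset.mul_sum]
    refine Finset.sum_congr rfl fun j hj => ?_
    simp only [Finset.mem_range, Nat.lt_succ_iff] at hj
    simp only [Finset.mem_range] at hi
    have hjk : j + (i - j) = i := by omega
    have := key hp hchar (p := p) (R := R) (j := j) (k := i - j) (by omega)
    rw [hjk] at this
    simp only [hf, hF, hjk]
    calc F i * (t ^ i * (a ^ j * b ^ (i - j) * (i.choose j : R)))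
        = (F i * (i.choose j : R)) * t ^ i * a ^ j * b ^ (i - j) := by ring
      _ = (F j * F (i - j)) * t ^ i * a ^ j * b ^ (i - j) := by rw [this]
      _ = _ := by ring
  have hRHS : truncExp p (t * a) * truncExp p (t * b)
      = ∑ x ∈ Finset.range p ×ˢ Finset.range p, f x := by
    unfold truncExp
    rw [Finset.sum_mul_sum]
    rw [Finset.sum_product]
    refine Finset.sum_congr rfl fun i _ => Finset.sum_congr rfl fun j _ => ?_
    simp only [hf, hF, mul_pow, pow_add]
    ring
  rw [hLHS, hRHS]
  have hfilter : ∑ x ∈ Finset.range p ×ˢ Finset.range p, f x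
      = ∑ x ∈ (Finset.range p ×ˢ Finset.range p).filter (fun x => x.1 + x.2 < p), f x := by
    refine (Finset.sum_subset (Finset.filter_subset _ _) ?_).symm
    intro x hx hxn
    simp only [Finset.mem_filter, hx, true_and, not_lt] at hxn
    have : t ^ (x.1 + x.2) = 0 := by
      have : x.1 + x.2 = p + (x.1 + x.2 - p) := by omega
      rw [this, pow_add, ht, zero_mul]
    simp only [hf, this, mul_zero, zero_mul]
  rw [hfilter]
  rw [Finset.sum_sigma' (Finset.range p) (fun i => Finset.range (i + 1))
    (fun i j => f (j, i - j))]
  refine Finset.sum_bij' (fun x _ => (x.2, x.1 - x.2)) (fun x _ => ⟨x.1 + x.2, x.1⟩) ?_ ?_ ?_ ?_ ?_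
  · intro x hx
    simp only [Finset.mem_sigma, Finset.mem_range, Nat.lt_succ_iff] at hx
    simp only [Finset.mem_filter, Finset.mem_product, Finset.mem_range]
    omega
  · intro x hx
    simp only [Finset.mem_filter, Finset.mem_product, Finset.mem_range] at hx
    simp only [Finset.mem_sigma, Finset.mem_range, Nat.lt_succ_iff]
    omega
  · rintro ⟨i, j⟩ hx
    simp only [Finset.mem_sigma, Finset.mem_range, Nat.lt_succ_iff] at hx
    have hij : j + (i - j) = i := by omega
    simp [hij]
  · rintro ⟨i, j⟩ hx
    simp only [Finset.mem_filter, Finset.mem_product, Finset.mem_range] at hx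
    exact Prod.ext rfl (by simp)
  · intro x hx
    rfl
end

section
/- Let p be a prime and R a commutative ring in which p·1 = 0. Let g ∈ R[X] be a polynomial of degree < p. Then g(X + Y) = g(X) + g(Y) in the polynomial ring R[X, Y] if and only if there exists a ∈ R such that g = a·X. (This is the ring-level content of the statement that the sheaf of homomorphisms from α_p to α_p is canonically isomorphic to the additive group G_a: additive polynomials of degree less than p are exactly the scalar multiples of X.) -/
open Polynomial MvPolynomial

lemma aux_aeval_CX_add_X {R : Type*} [CommRing R] (g : Polynomial R) :
    Polynomial.aeval ((Polynomial.C Polynomial.X + Polynomial.X : (Polynomial R)[X])) g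
      = Polynomial.taylor Polynomial.X (g.map Polynomial.C) := by
  rw [taylor_apply, comp, Polynomial.eval₂_map, Polynomial.aeval_def, add_comm]
  congr 1

lemma aux_aeval_CX {R : Type*} [CommRing R] (g : Polynomial R) :
    Polynomial.aeval ((Polynomial.C Polynomial.X : (Polynomial R)[X])) g = Polynomial.C g := by
  have := Polynomial.aeval_algHom_apply
    (Polynomial.CAlgHom (R := R) (A := Polynomial R)) Polynomial.X g
  simpa using this

lemma aux_aeval_X {R : Type*} [CommRing R] (g : Polynomial R) :
    Polynomial.aeval ((Polynomial.X : (Polynomial R)[X])) g = g.map Polynomial.C := by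
  rw [Polynomial.aeval_def, ← Polynomial.eval₂_C_X (p := g.map Polynomial.C),
    Polynomial.eval₂_map]
  congr 1

/-- Additive polynomials of degree `< p` over a ring of characteristic `p` are exactly the
scalar multiples of `X`. (Ring-level content of `Hom(α_p, α_p) ≅ 𝔾ₐ`.) -/
theorem additive_poly_of_degree_lt_char (p : ℕ) (hp : p.Prime) (R : Type*) [CommRing R]
    (hchar : (p : R) = 0) (g : Polynomial R) (hdeg : g.degree < p) :
    Polynomial.aeval (MvPolynomial.X 0 + MvPolynomial.X 1 : MvPolynomial (Fin 2) R) g =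
        Polynomial.aeval (MvPolynomial.X 0 : MvPolynomial (Fin 2) R) g +
          Polynomial.aeval (MvPolynomial.X 1 : MvPolynomial (Fin 2) R) g ↔
      ∃ a : R, g = Polynomial.C a * Polynomial.X := by
  constructor
  · intro h
    -- transport the identity to `(R[X])[Y]` via `X 0 ↦ C X`, `X 1 ↦ X`
    set φ : MvPolynomial (Fin 2) R →ₐ[R] (Polynomial R)[X] :=
      MvPolynomial.aeval ![Polynomial.C Polynomial.X, Polynomial.X] with hφ
    have h' := congrArg φ h
    rw [map_add, ← Polynomial.aeval_algHom_apply, ← Polynomial.aeval_algHom_apply,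
      ← Polynomial.aeval_algHom_apply] at h'
    have hφ01 : φ (MvPolynomial.X 0 + MvPolynomial.X 1)
        = Polynomial.C Polynomial.X + Polynomial.X := by simp [hφ]
    have hφ0 : φ (MvPolynomial.X 0) = Polynomial.C Polynomial.X := by simp [hφ]
    have hφ1 : φ (MvPolynomial.X 1) = Polynomial.X := by simp [hφ]
    rw [hφ01, hφ0, hφ1, aux_aeval_CX_add_X, aux_aeval_CX, aux_aeval_X] at h'
    -- constant coefficient vanishes
    have h0 : g.coeff 0 = 0 := by
      have hc := congrArg (fun q => Polynomial.coeff q 0) h'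
      simp only [taylor_coeff_zero, Polynomial.eval_map, Polynomial.eval₂_C_X,
        Polynomial.coeff_add, Polynomial.coeff_C_zero, Polynomial.coeff_map] at hc
      rw [left_eq_add] at hc
      have := congrArg (fun q => Polynomial.coeff q 0) hc
      simpa using this
    -- derivative is constant
    have h1 : Polynomial.derivative g = Polynomial.C (g.coeff 1) := by
      have hc := congrArg (fun q => Polynomial.coeff q 1) h'
      simp only [taylor_coeff_one, Polynomial.coeff_add, Polynomial.coeff_C,
        Polynomial.coeff_map, if_neg one_ne_zero, zero_add] at hc
      rw [Polynomial.derivative_map, Polynomial.eval_map, Polynomial.eval₂_C_X] at hc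
      exact hc
    -- hence `n * coeff n g = 0` for `n ≥ 2`
    have hmul : ∀ n : ℕ, 2 ≤ n → (n : R) * g.coeff n = 0 := by
      intro n hn
      have hd := congrArg (fun q => Polynomial.coeff q (n - 1)) h1
      simp only [Polynomial.coeff_derivative, Polynomial.coeff_C,
        if_neg (show ¬ n - 1 = 0 by omega)] at hd
      have hcast : ((n - 1 : ℕ) : R) + 1 = (n : R) := by
        have e : ((n - 1 : ℕ) : R) + 1 = (((n - 1) + 1 : ℕ) : R) := by push_cast; ring
        rw [e, show n - 1 + 1 = n from by omega]
      rw [show n - 1 + 1 = n from by omega, hcast] at hd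
      rw [mul_comm]; exact hd
    -- `(n : R)` is invertible for `0 < n < p`, so those coefficients vanish
    have hz : ∀ n : ℕ, 2 ≤ n → g.coeff n = 0 := by
      intro n hn
      by_cases hnp : n < p
      · have hpn : ¬ p ∣ n := Nat.not_dvd_of_pos_of_lt (by omega) hnp
        have hcop : Nat.Coprime p n := (Nat.Prime.coprime_iff_not_dvd hp).2 hpn
        have hgcd : Nat.gcd p n = 1 := hcop
        have hbez := Nat.gcd_eq_gcd_ab p n
        rw [hgcd, Nat.cast_one] at hbez
        have hinv : (1 : R) = (n : R) * ((Nat.gcdB p n : ℤ) : R) := by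
          have hcast := congrArg (fun z : ℤ => ((z : ℤ) : R)) hbez
          push_cast at hcast
          rw [hchar] at hcast
          simpa using hcast
        calc g.coeff n = ((n : R) * ((Nat.gcdB p n : ℤ) : R)) * g.coeff n := by
              rw [← hinv, one_mul]
          _ = ((Nat.gcdB p n : ℤ) : R) * ((n : R) * g.coeff n) := by ring
          _ = 0 := by rw [hmul n hn, mul_zero]
      · refine Polynomial.coeff_eq_zero_of_degree_lt (lt_of_lt_of_le hdeg ?_)
        exact_mod_cast Nat.cast_le.2 (by omega : p ≤ n)
    refine ⟨g.coeff 1, ?_⟩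
    ext n
    rcases n with _ | n
    · simpa using h0
    rcases n with _ | n
    · simp
    · rw [hz (n + 2) (by omega)]
      simp
  · rintro ⟨a, rfl⟩
    simp [mul_add]
end

section
/- Let X be an integral normal scheme, let g : T → X be a finite morphism of schemes, and let U ⊆ X be a nonempty open subscheme. Then the restriction map from sections of g over X to sections of g over U, i.e. from { s : X → T | g ∘ s = id_X } to { s : U → T | g ∘ s equals the open immersion U → X }, is bijective. (Surjectivity is the statement that any rational section of a finite morphism to a normal integral scheme is defined everywhere; injectivity follows from separatedness of g and density of U.) -/
/-!
Over an affine open `V ∋ x` of `X`, the morphism `g` is `Spec` of a finite ring map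
`Γ(X, V) → B`, and a section over `U` gives, at the generic point, a map `B → K(X)` compatible
with `Γ(X, V) → 𝒪_{X,x} → K(X)`. Its values are integral over `𝒪_{X,x}`, hence lie in `𝒪_{X,x}`
by normality, so the section extends over `Spec 𝒪_{X,x}` and then spreads out to a
neighbourhood of `x`. All these local sections agree at the generic point, so by separatedness
of `g` they agree on overlaps and glue to a section over `X`.
-/

open AlgebraicGeometry CategoryTheory

lemma RingHom.IsIntegral.exists_lift_of_isIntegrallyClosed {A B R K : Type*} [CommRing A]
    [CommRing B] [CommRing R] [IsIntegrallyClosed R] [Field K] [Algebra R K]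
    [IsFractionRing R K] {φ : A →+* B} (hφ : φ.IsIntegral) (germ : A →+* R) (σ : B →+* K)
    (h : σ.comp φ = (algebraMap R K).comp germ) :
    ∃ τ : B →+* R, τ.comp φ = germ ∧ (algebraMap R K).comp τ = σ := by
  have hint (b : B) : _root_.IsIntegral R (σ b) :=
    RingHom.IsIntegralElem.of_comp (h ▸ (hφ b).map σ)
  have inj := IsIntegralClosure.algebraMap_injective R R K
  let τ : B →+* R :=
    { toFun b := IsIntegralClosure.mk' R (σ b) (hint b)
      map_one' := inj (by simp)
      map_mul' a b := inj (by simp)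
      map_zero' := inj (by simp)
      map_add' a b := inj (by simp) }
  have hτ : (algebraMap R K).comp τ = σ :=
    RingHom.ext fun b => IsIntegralClosure.algebraMap_mk' R (σ b) (hint b)
  refine ⟨τ, RingHom.ext fun a => inj ?_, hτ⟩
  rw [← RingHom.comp_apply, ← RingHom.comp_assoc, hτ, h, RingHom.comp_apply]

namespace AlgebraicGeometry

lemma IsAffineOpen.exists_SpecMap_comp_fromSpec {T : Scheme} {W : T.Opens}
    (hW : IsAffineOpen W) {R : CommRingCat} (φ : Spec R ⟶ T) (hφ : Set.range φ.base ⊆ W) :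
    ∃ σ : Γ(T, W) ⟶ R, Spec.map σ ≫ hW.fromSpec = φ :=
  ⟨Spec.preimage (IsOpenImmersion.lift hW.fromSpec φ (hW.range_fromSpec ▸ hφ)),
    by rw [Spec.map_preimage]; exact IsOpenImmersion.lift_fac _ _ _⟩

lemma Scheme.exists_lift_fromSpecStalk_of_isIntegrallyClosed {X T : Scheme} [IsIntegral X]
    (g : T ⟶ X) [IsIntegralHom g] (x : X) [IsIntegrallyClosed (X.presheaf.stalk x)]
    (φK : Spec X.functionField ⟶ T) (hφK : φK ≫ g = X.fromSpecStalk (genericPoint X)) :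
    ∃ φ : Spec (X.presheaf.stalk x) ⟶ T, φ ≫ g = X.fromSpecStalk x ∧
      Spec.map (X.presheaf.stalkSpecializes (genericPoint_specializes x)) ≫ φ = φK := by
  obtain ⟨_, ⟨V, hV : IsAffineOpen V, rfl⟩, hxV, -⟩ :=
    X.isBasis_affineOpens.exists_subset_of_mem_open (Set.mem_univ x) isOpen_univ
  have hW : IsAffineOpen (g ⁻¹ᵁ V) := hV.preimage g
  have hξV : genericPoint X ∈ V := (genericPoint_specializes x).mem_open V.2 hxV
  obtain ⟨σ, hσ⟩ := hW.exists_SpecMap_comp_fromSpec φK <| by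
    rintro _ ⟨p, rfl⟩
    have : (φK ≫ g).base p ∈ Set.range (X.fromSpecStalk (genericPoint X)).base :=
      hφK ▸ ⟨p, rfl⟩
    rw [Scheme.range_fromSpecStalk] at this
    exact this.mem_open V.2 hξV
  have hsquare : g.app V ≫ σ = X.presheaf.germ V x hxV ≫
      X.presheaf.stalkSpecializes (genericPoint_specializes x) := by
    apply Spec.map_injective
    rw [← cancel_mono hV.fromSpec, Spec.map_comp, Spec.map_comp, Category.assoc, Category.assoc,
      Scheme.Hom.app_eq_appLE, IsAffineOpen.SpecMap_appLE_fromSpec g hV hW le_rfl,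
      reassoc_of% hσ, hφK, ← SpecMap_stalkSpecializes_fromSpecStalk (genericPoint_specializes x),
      ← hV.fromSpecStalk_eq_fromSpecStalk hxV, IsAffineOpen.fromSpecStalk]
  obtain ⟨τ, hτg, hτσ⟩ := (g.isIntegral_app V hV).exists_lift_of_isIntegrallyClosed
    (X.presheaf.germ V x hxV).hom σ.hom (congrArg CommRingCat.Hom.hom hsquare)
  let τ' : Γ(T, g ⁻¹ᵁ V) ⟶ X.presheaf.stalk x := CommRingCat.ofHom τ
  have hτg' : g.app V ≫ τ' = X.presheaf.germ V x hxV := CommRingCat.hom_ext hτg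
  have hτσ' : τ' ≫ X.presheaf.stalkSpecializes (genericPoint_specializes x) = σ :=
    CommRingCat.hom_ext hτσ
  refine ⟨Spec.map τ' ≫ hW.fromSpec, ?_, ?_⟩
  · rw [Category.assoc, ← IsAffineOpen.SpecMap_appLE_fromSpec g hV hW le_rfl,
      ← Scheme.Hom.app_eq_appLE, ← Spec.map_comp_assoc, hτg',
      ← hV.fromSpecStalk_eq_fromSpecStalk hxV, IsAffineOpen.fromSpecStalk]
  · rw [← Spec.map_comp_assoc, hτσ', hσ]

namespace Scheme.PartialMap

variable {X T : Scheme}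

lemma SpecMap_stalkSpecializes_fromSpecStalkOfMem (f : X.PartialMap T) {x y : X} (h : y ⤳ x)
    (hx : x ∈ f.domain) (hy : y ∈ f.domain) :
    Spec.map (X.presheaf.stalkSpecializes h) ≫ f.fromSpecStalkOfMem hx =
      f.fromSpecStalkOfMem hy := by
  have : Spec.map (X.presheaf.stalkSpecializes h) ≫ f.domain.fromSpecStalkOfMem x hx =
      f.domain.fromSpecStalkOfMem y hy := by
    rw [← cancel_mono f.domain.ι, Category.assoc, Opens.fromSpecStalkOfMem_ι,
      Opens.fromSpecStalkOfMem_ι, SpecMap_stalkSpecializes_fromSpecStalk]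
  simp only [fromSpecStalkOfMem, reassoc_of% this]

lemma exists_equiv_mem_domain_of_isIntegrallyClosed [IsIntegral X] (g : T ⟶ X) [IsFinite g]
    (f : X.PartialMap T) (hf : f.hom ≫ g = f.domain.ι) (x : X)
    [IsIntegrallyClosed (X.presheaf.stalk x)] :
    ∃ ψ : X.PartialMap T, x ∈ ψ.domain ∧ ψ.hom ≫ g = ψ.domain.ι ∧ ψ.equiv f := by
  have hfK : f.fromFunctionField ≫ g = X.fromSpecStalk (genericPoint X) := by
    simp only [fromSpecStalkOfMem, Category.assoc, hf, Opens.fromSpecStalkOfMem_ι]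
  obtain ⟨φ, hφg, hφK⟩ := exists_lift_fromSpecStalk_of_isIntegrallyClosed g x _ hfK
  have hφ : φ ≫ g = X.fromSpecStalk x ≫ 𝟙 X := by rw [hφg, Category.comp_id]
  let ψ := ofFromSpecStalk (𝟙 X) g φ hφ
  have hxψ : x ∈ ψ.domain := mem_domain_ofFromSpecStalk (𝟙 X) g φ hφ
  have hξψ : genericPoint X ∈ ψ.domain := (genericPoint_specializes x).mem_open ψ.domain.2 hxψ
  refine ⟨ψ, hxψ, by simpa using ofFromSpecStalk_comp (𝟙 X) g φ hφ, ?_⟩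
  refine equiv_of_fromSpecStalkOfMem_eq ψ f hξψ
    ((genericPoint_specializes _).mem_open f.domain.2 f.dense_domain.nonempty.choose_spec) ?_
  rw [← ψ.SpecMap_stalkSpecializes_fromSpecStalkOfMem (genericPoint_specializes x) hxψ,
    fromSpecStalkOfMem_ofFromSpecStalk, hφK]

lemma exists_section_of_pairwise_equiv [IsReduced X] (g : T ⟶ X) [IsSeparated g] {ι : Type*}
    (ψ : ι → X.PartialMap T) (hψ : ∀ i, (ψ i).hom ≫ g = (ψ i).domain.ι)
    (hcover : ∀ x, ∃ i, x ∈ (ψ i).domain) (hequiv : ∀ i j, (ψ i).equiv (ψ j)) :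
    ∃ s : X ⟶ T, s ≫ g = 𝟙 X ∧ ∀ i, (ψ i).domain.ι ≫ s = (ψ i).hom := by
  let _ : T.Over X := ⟨g⟩
  have : IsSeparated (T ↘ X) := ‹IsSeparated g›
  have (i : ι) : (ψ i).IsOver X := ⟨hψ i⟩
  let 𝒰 : X.OpenCover :=
    Cover.mkOfCovers ι (fun i => (ψ i).domain) (fun i => (ψ i).domain.ι) fun x =>
      (hcover x).imp fun i hi => ⟨⟨x, hi⟩, rfl⟩
  have compat (i j : ι) : Limits.pullback.fst (ψ i).domain.ι (ψ j).domain.ι ≫ (ψ i).hom =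
      Limits.pullback.snd (ψ i).domain.ι (ψ j).domain.ι ≫ (ψ j).hom := by
    have e := (equiv_iff_of_isSeparated (S := X)).mp (hequiv i j)
    rwa [← cancel_epi (isPullback_opens_inf (ψ i).domain (ψ j).domain).isoPullback.hom,
      IsPullback.isoPullback_hom_fst_assoc, IsPullback.isoPullback_hom_snd_assoc]
  have hglue (i) : (ψ i).domain.ι ≫ 𝒰.glueMorphisms (fun i => (ψ i).hom) compat = (ψ i).hom :=
    𝒰.ι_glueMorphisms _ compat i
  refine ⟨𝒰.glueMorphisms (fun i => (ψ i).hom) compat,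
    𝒰.hom_ext _ _ fun (i : ι) => ?_, hglue⟩
  change (ψ i).domain.ι ≫ _ ≫ g = (ψ i).domain.ι ≫ 𝟙 X
  rw [reassoc_of% hglue i, hψ, Category.comp_id]

end Scheme.PartialMap

end AlgebraicGeometry

/-- Let `X` be an integral scheme which is normal (all local rings are integrally closed
domains), `g : T ⟶ X` a finite morphism of schemes, and `U` a nonempty open subscheme of `X`.
Then restriction from sections of `g` over `X` to sections of `g` over `U` is bijective. -/
theorem sections_of_finite_morphism_extend
    (X T : Scheme) [IsIntegral X]
    (hnormal : ∀ x : X, IsIntegrallyClosed (X.presheaf.stalk x) ∧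
      IsDomain (X.presheaf.stalk x))
    (g : T ⟶ X) [IsFinite g]
    (U : X.Opens) (hU : Nonempty U) :
    Function.Bijective
      (fun s : { s : X ⟶ T // s ≫ g = 𝟙 X } =>
        (⟨U.ι ≫ s.1, by rw [Category.assoc, s.2, Category.comp_id]⟩ :
          { s : (U : Scheme) ⟶ T // s ≫ g = U.ι })) := by
  have hUd : Dense (U : Set X) := U.isOpen.dense (let ⟨u⟩ := hU; ⟨u.1, u.2⟩)
  refine ⟨fun s₁ s₂ h => ?_, fun ⟨s, hs⟩ => ?_⟩
  · have := Opens.isDominant_ι hUd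
    exact Subtype.ext (ext_of_isDominant_of_isSeparated g (s₁.2.trans s₂.2.symm) U.ι
      (congrArg Subtype.val h))
  let f : X.PartialMap T := ⟨U, hUd, s⟩
  choose ψ hxψ hψ hψf using fun x =>
    have := (hnormal x).1
    f.exists_equiv_mem_domain_of_isIntegrallyClosed g hs x
  -- Gluing `f` itself along with the `ψ x` makes the glued section restrict to `s` on `U`.
  let ψ' : Option X → X.PartialMap T := fun o => o.elim f ψ
  have hψ'f : ∀ o, (ψ' o).equiv f := by
    rintro (_ | x)
    exacts [.refl f, hψf x]
  obtain ⟨r, hr, hrψ'⟩ := Scheme.PartialMap.exists_section_of_pairwise_equiv g ψ'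
    (by rintro (_ | x); exacts [hs, hψ x]) (fun x => ⟨some x, hxψ x⟩)
    (fun o o' => (hψ'f o).trans (hψ'f o').symm)
  exact ⟨⟨r, hr⟩, Subtype.ext (hrψ' none)⟩
end

section
/- Let Γ be an abelian group and M ⊆ Γ an additive submonoid which is saturated, i.e. for every x ∈ Γ and every positive integer n, if n·x ∈ M then x ∈ M. Let L be an abelian group and ℓ : L → M an arbitrary function. Call a group homomorphism f : L → Γ of bounded monodromy if for every γ ∈ L there exists N ∈ ℕ with N·ℓ(γ) − f(γ) ∈ M and N·ℓ(γ) + f(γ) ∈ M. Then the set Hom^†(L, Γ) of bounded-monodromy homomorphisms is a subgroup of the group Hom(L, Γ) of all homomorphisms, and the quotient group Hom(L, Γ)/Hom^†(L, Γ) is torsion-free. (This is the key step in the proof of the main theorem: the quotient of the Kummer-log-flat relative Picard sheaf by the logarithmic Jacobian is torsion-free because the bounded monodromy subgroups are saturated.) -/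
def bmSubgroup (Γ : Type*) [AddCommGroup Γ] (M : AddSubmonoid Γ)
    (L : Type*) [AddCommGroup L] (ℓ : L → M) : AddSubgroup (L →+ Γ) where
  carrier := {f : L →+ Γ | ∀ γ : L, ∃ N : ℕ,
          N • (ℓ γ : Γ) - f γ ∈ M ∧ N • (ℓ γ : Γ) + f γ ∈ M}
  zero_mem' := fun γ => ⟨0, by simpa using M.zero_mem⟩
  add_mem' := by
    rintro f g hf hg γ
    obtain ⟨N₁, h1, h2⟩ := hf γ
    obtain ⟨N₂, h3, h4⟩ := hg γ
    refine ⟨N₁ + N₂, ?_, ?_⟩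
    · have := M.add_mem h1 h3
      convert this using 1
      simp only [AddMonoidHom.add_apply, add_nsmul]
      abel
    · have := M.add_mem h2 h4
      convert this using 1
      simp only [AddMonoidHom.add_apply, add_nsmul]
      abel
  neg_mem' := by
    rintro f hf γ
    obtain ⟨N, h1, h2⟩ := hf γ
    exact ⟨N, by simpa [sub_neg_eq_add] using h2, by simpa [sub_eq_add_neg]
      using h1⟩

/-- Bounded-monodromy homomorphisms form a subgroup `H` of `Hom(L, Γ)`, and if the submonoid
`M` of `Γ` is saturated then the quotient `Hom(L, Γ) / H` is torsion-free. -/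
theorem bounded_monodromy_subgroup_and_torsionfree_quotient
    (Γ : Type*) [AddCommGroup Γ] (M : AddSubmonoid Γ)
    (hsat : ∀ (x : Γ) (n : ℕ), 0 < n → n • x ∈ M → x ∈ M)
    (L : Type*) [AddCommGroup L] (ℓ : L → M) :
    ∃ H : AddSubgroup (L →+ Γ),
      (↑H = {f : L →+ Γ | ∀ γ : L, ∃ N : ℕ,
          N • (ℓ γ : Γ) - f γ ∈ M ∧ N • (ℓ γ : Γ) + f γ ∈ M}) ∧
      ∀ (q : (L →+ Γ) ⧸ H) (n : ℕ), 0 < n → n • q = 0 → q = 0 := by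
  refine ⟨bmSubgroup Γ M L ℓ, rfl, ?_⟩
  intro q n hn hq
  induction q using QuotientAddGroup.induction_on with
  | H f =>
      have hmem : n • f ∈ bmSubgroup Γ M L ℓ := by
        rw [← QuotientAddGroup.eq_zero_iff]
        simpa using hq
      rw [QuotientAddGroup.eq_zero_iff]
      intro γ
      obtain ⟨N, h1, h2⟩ := hmem γ
      have hl : ∀ k : ℕ, k • (ℓ γ : Γ) ∈ M := fun k => M.nsmul_mem (ℓ γ).2 k
      obtain ⟨m, rfl⟩ : ∃ m, n = m + 1 := ⟨n - 1, (Nat.succ_pred_eq_of_pos hn).symm⟩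
      simp only [AddMonoidHom.nsmul_apply] at h1 h2
      refine ⟨N, hsat _ (m+1) hn ?_, hsat _ (m+1) hn ?_⟩
      · have key : (m+1) • (N • (ℓ γ : Γ) - f γ)
            = m • (N • (ℓ γ : Γ)) + (N • (ℓ γ : Γ) - (m+1) • f γ) := by
          rw [smul_sub, succ_nsmul]; abel
        rw [key]
        exact M.add_mem (M.nsmul_mem (hl N) m) h1
      · have key : (m+1) • (N • (ℓ γ : Γ) + f γ)
            = m • (N • (ℓ γ : Γ)) + (N • (ℓ γ : Γ) + (m+1) • f γ) := by
          rw [smul_add, succ_nsmul]; abel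
        rw [key]
        exact M.add_mem (M.nsmul_mem (hl N) m) h2
end

section
/- Let Γ be a torsion-free abelian group and M ⊆ Γ an additive submonoid which is sharp, i.e. M ∩ (−M) = {0}. Let G be a finite connected multigraph, given by finite sets V (vertices, nonempty) and E (edges) with source and target maps s, t : E → V, connected in the sense that the equivalence relation on V generated by { (s(e), t(e)) : e ∈ E } identifies all vertices. Let ℓ : E → M be a length function with ℓ(e) ≠ 0 for all e. Let φ : V → Γ and n : E → ℤ satisfy φ(t(e)) − φ(s(e)) = n(e)·ℓ(e) for every edge e (φ is piecewise linear with integer slopes n(e)). If for every vertex v the total outgoing slope vanishes, i.e. ∑_{e : s(e) = v} n(e) − ∑_{e : t(e) = v} n(e) = 0, then φ is constant. (This is the combinatorial core of the proof that for a log curve f : X → S the natural map G_m^{log}(S) → f_*G_m^{log}(X) is an isomorphism: a piecewise-linear function on the dual graph whose associated line bundle has multidegree zero is constant.) -/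
/-- A piecewise-linear function on a connected finite multigraph, metrized by a sharp submonoid
of a torsion-free abelian group, whose total outgoing slope vanishes at every vertex, is
constant. -/
theorem pl_function_with_zero_multidegree_is_constant
    (Γ : Type*) [AddCommGroup Γ]
    (htf : ∀ (n : ℕ) (x : Γ), 0 < n → n • x = 0 → x = 0)
    (M : AddSubmonoid Γ) (hsharp : ∀ x ∈ M, -x ∈ M → x = 0)
    (V E : Type*) [Fintype V] [Fintype E] [Nonempty V] [DecidableEq V]
    (s t : E → V)
    (hconn : ∀ v w : V, Relation.EqvGen (fun a b => ∃ e : E, s e = a ∧ t e = b) v w)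
    (ℓ : E → Γ) (hℓM : ∀ e, ℓ e ∈ M) (hℓ0 : ∀ e, ℓ e ≠ 0)
    (φ : V → Γ) (n : E → ℤ)
    (hpl : ∀ e, φ (t e) - φ (s e) = n e • ℓ e)
    (hbal : ∀ v : V,
      ((∑ e ∈ Finset.univ.filter fun e => s e = v, n e) -
        ∑ e ∈ Finset.univ.filter fun e => t e = v, n e) = 0) :
    ∀ v w : V, φ v = φ w := by
  classical
  -- Green's formula: ∑ e, (n e)² • ℓ e = 0
  have hsum : ∑ e : E, (n e * n e) • ℓ e = 0 := by
    have h1 : ∑ e : E, (n e * n e) • ℓ e = ∑ e : E, n e • (φ (t e) - φ (s e)) := by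
      refine Finset.sum_congr rfl fun e _ => ?_
      rw [hpl e, smul_smul]
    have h2 : ∑ e : E, n e • (φ (t e) - φ (s e)) =
        (∑ e : E, n e • φ (t e)) - ∑ e : E, n e • φ (s e) := by
      rw [← Finset.sum_sub_distrib]
      exact Finset.sum_congr rfl fun e _ => smul_sub _ _ _
    have hfib : ∀ (g : E → V), ∑ e : E, n e • φ (g e) =
        ∑ v : V, (∑ e ∈ Finset.univ.filter fun e => g e = v, n e) • φ v := by
      intro g
      rw [← Finset.sum_fiberwise Finset.univ g (fun e => n e • φ (g e))]
      refine Finset.sum_congr rfl fun v _ => ?_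
      rw [Finset.sum_smul]
      refine Finset.sum_congr rfl fun e he => ?_
      rw [(Finset.mem_filter.mp he).2]
    rw [h1, h2, hfib s, hfib t, ← Finset.sum_sub_distrib]
    refine Finset.sum_eq_zero fun v _ => ?_
    rw [← sub_smul]
    have := hbal v
    rw [sub_eq_zero] at this
    rw [← this, sub_self, zero_smul]
  -- each term is zero
  have hterm : ∀ e : E, (n e * n e) • ℓ e = 0 := by
    intro e
    have hmem : ∀ e : E, (n e * n e) • ℓ e ∈ M := by
      intro e
      have : (n e * n e) = ((n e).natAbs * (n e).natAbs : ℕ) := by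
        exact Int.natAbs_mul_self.symm
      rw [this, natCast_zsmul]
      exact AddSubmonoid.nsmul_mem M (hℓM e) _
    have hrest : ∑ e' ∈ Finset.univ.erase e, (n e' * n e') • ℓ e' ∈ M :=
      AddSubmonoid.sum_mem M fun e' _ => hmem e'
    apply hsharp _ (hmem e)
    have : (n e * n e) • ℓ e + ∑ e' ∈ Finset.univ.erase e, (n e' * n e') • ℓ e' = 0 := by
      rw [Finset.add_sum_erase Finset.univ (fun e' => (n e' * n e') • ℓ e') (Finset.mem_univ e)]
      exact hsum
    rw [neg_eq_of_add_eq_zero_right this]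
    exact hrest
  -- hence n e = 0 and φ constant along edges
  have hedge : ∀ e : E, φ (s e) = φ (t e) := by
    intro e
    have hne : n e = 0 := by
      by_contra h
      apply hℓ0 e
      have h2 : ((n e).natAbs * (n e).natAbs : ℕ) • ℓ e = 0 := by
        have : (n e * n e) = ((n e).natAbs * (n e).natAbs : ℕ) := by
          exact Int.natAbs_mul_self.symm
        rw [← natCast_zsmul, ← this]
        exact hterm e
      exact htf _ _ (Nat.mul_pos (Int.natAbs_pos.mpr h) (Int.natAbs_pos.mpr h)) h2
    have := hpl e
    rw [hne, zero_smul, sub_eq_zero] at this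
    exact this.symm
  intro v w
  induction hconn v w with
  | rel a b h => obtain ⟨e, rfl, rfl⟩ := h; exact hedge e
  | refl => rfl
  | symm _ _ _ ih => exact ih.symm
  | trans _ _ _ _ _ ih1 ih2 => exact ih1.trans ih2
end
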